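/- Let G and C be n×n Hermitian complex matrices, let f₁ and f₂ be monotonically increasing real functions on ℝ, and set A = f₁(G) and B = f₂(G). Fix an index k and a real number a ≥ 0, and suppose that Σ_{j=1}^k λ_j↓(aA + B) ≤ Σ_{j=1}^k λ_j↓(aA + C). Then for every b with 0 ≤ b ≤ a, we also have Σ_{j=1}^k λ_j↓(bA + B) ≤ Σ_{j=1}^k λ_j↓(bA + C). -/

import Mathlib

/-!
For `t ≥ 0` the matrix `t • A + B` is the function `t f₁ + f₂` of `G`, which is monotone, so its
eigenvalues in nonincreasing order are `t f₁ (μ j) + f₂ (μ j)`, where `μ` lists those of `G` in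
nonincreasing order. Writing `S` for the sum of the `k` largest eigenvalues, `S (t • A + B)` is
therefore affine in `t` with slope `∑ j < k, f₁ (μ j)`, and `S ((a - b) • A)` is `a - b` times that
slope. Ky Fan's inequality `S (X + Y) ≤ S X + S Y` gives `S (a • A + C) ≤ S ((a - b) • A) +
S (b • A + C)`; subtracting `S ((a - b) • A)` from both sides of the hypothesis yields the claim.
Ky Fan's inequality itself comes from the maximum principle
`∑ i ∈ s, (V⋆ X V) i i ≤ S_{#s} X` for unitary `V`, with equality for the eigenbasis of `X`.
-/

open Matrix
open scoped ComplexOrder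

/-- The eigenvalues of a square matrix, sorted in non-increasing order
(junk value `0` if the matrix is not Hermitian). -/
noncomputable def eigValsDown {𝕜 : Type*} [RCLike 𝕜] {n : ℕ}
    (A : Matrix (Fin n) (Fin n) 𝕜) : Fin n → ℝ :=
  if hA : A.IsHermitian then
    fun k => (hA.eigenvalues ∘ Tuple.sort hA.eigenvalues) k.rev
  else 0

/-- Functional calculus: apply a real function to a Hermitian matrix via its spectral
decomposition (junk value `0` if the matrix is not Hermitian). -/
noncomputable def matFun {𝕜 : Type*} [RCLike 𝕜] {n : ℕ} (h : ℝ → ℝ)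
    (A : Matrix (Fin n) (Fin n) 𝕜) : Matrix (Fin n) (Fin n) 𝕜 :=
  if hA : A.IsHermitian then
    (hA.eigenvectorUnitary : Matrix (Fin n) (Fin n) 𝕜) *
      Matrix.diagonal (fun i => (h (hA.eigenvalues i) : 𝕜)) *
      star (hA.eigenvectorUnitary : Matrix (Fin n) (Fin n) 𝕜)
  else 0

/-- The operator norm (largest singular value) of a matrix. -/
noncomputable def opNorm {𝕜 : Type*} [RCLike 𝕜] {n : ℕ}
    (A : Matrix (Fin n) (Fin n) 𝕜) : ℝ :=
  ‖Matrix.toEuclideanCLM (𝕜 := 𝕜) A‖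

/-- The matrix absolute value `|M| = (Mᴴ M)^(1/2)`. -/
noncomputable def matAbs {𝕜 : Type*} [RCLike 𝕜] {n : ℕ}
    (A : Matrix (Fin n) (Fin n) 𝕜) : Matrix (Fin n) (Fin n) 𝕜 :=
  ((Matrix.posSemidef_conjTranspose_mul_self A).1.eigenvectorUnitary : Matrix (Fin n) (Fin n) 𝕜) *
    Matrix.diagonal ((↑) ∘ (√·) ∘ (Matrix.posSemidef_conjTranspose_mul_self A).1.eigenvalues) *
    (star (Matrix.posSemidef_conjTranspose_mul_self A).1.eigenvectorUnitary : Matrix (Fin n) (Fin n) 𝕜)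

/-- The Ky Fan `k`-norm: the sum of the `k` largest singular values. -/
noncomputable def kyFanNorm {𝕜 : Type*} [RCLike 𝕜] {n : ℕ} (k : ℕ)
    (A : Matrix (Fin n) (Fin n) 𝕜) : ℝ :=
  ∑ j ∈ Finset.univ.filter (fun j : Fin n => (j : ℕ) < k), eigValsDown (matAbs A) j

open Finset

section Sorting

variable {n : ℕ}

noncomputable def sortDown (c : Fin n → ℝ) : Fin n → ℝ :=
  fun j => c (Tuple.sort c j.rev)

def partialSum (k : ℕ) (v : Fin n → ℝ) : ℝ :=
  ∑ j ∈ univ.filter (fun j : Fin n => (j : ℕ) < k), v j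

lemma sortDown_antitone (c : Fin n → ℝ) : Antitone (sortDown c) :=
  fun _ _ hij => Tuple.monotone_sort c (Fin.rev_le_rev.mpr hij)

lemma sum_comp_sortDown (c : Fin n → ℝ) (F : ℝ → ℝ) :
    ∑ j, F (sortDown c j) = ∑ j, F (c j) :=
  Equiv.sum_comp (Fin.revPerm.trans (Tuple.sort c)) (fun j => F (c j))

lemma sortDown_comp_of_monotone (c : Fin n → ℝ) {g : ℝ → ℝ} (hg : Monotone g) :
    sortDown (g ∘ c) = g ∘ sortDown c := by
  have hsort : (g ∘ c) ∘ Tuple.sort (g ∘ c) = (g ∘ c) ∘ Tuple.sort c :=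
    Tuple.unique_monotone (Tuple.monotone_sort (g ∘ c)) (hg.comp (Tuple.monotone_sort c))
  funext j
  exact congrFun hsort j.rev

lemma partialSum_min (k : ℕ) (v : Fin n → ℝ) : partialSum (min n k) v = partialSum k v := by
  unfold partialSum
  congr 1
  ext j
  simp only [mem_filter, mem_univ, true_and]
  omega

lemma exists_card_eq_sum_eq_partialSum_sortDown (c : Fin n → ℝ) (k : ℕ) :
    ∃ s : Finset (Fin n), s.card = min n k ∧ ∑ i ∈ s, c i = partialSum k (sortDown c) := by
  let e : Fin n ↪ Fin n :=
    ⟨fun j => Tuple.sort c j.rev, (Tuple.sort c).injective.comp Fin.rev_injective⟩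
  refine ⟨(univ.filter fun j : Fin n => (j : ℕ) < k).map e, ?_, sum_map _ _ _⟩
  rw [card_map, Fin.card_filter_val_lt]

lemma sum_max_sub_sortDown_eq_partialSum (c : Fin n → ℝ) (i : Fin n) :
    ∑ j, max (c j - sortDown c i) 0 =
      partialSum (i + 1) (fun j => sortDown c j - sortDown c i) := by
  rw [← sum_comp_sortDown c (fun x => max (x - sortDown c i) 0), partialSum, sum_filter]
  refine sum_congr rfl fun j _ => ?_
  split_ifs with hj
  · exact max_eq_left (sub_nonneg.mpr (sortDown_antitone c (Fin.le_def.mpr (by omega))))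
  · exact max_eq_right (sub_nonpos.mpr (sortDown_antitone c (Fin.le_def.mpr (by omega))))

/-- With `t` the `k`-th largest entry of `c`, `c j * d j ≤ max (c j - t) 0 + t * d j` since
`0 ≤ d j ≤ 1`, and the right-hand side sums to the sum of the `k` largest entries. -/
lemma sum_mul_le_partialSum_sortDown (c d : Fin n → ℝ) (hd0 : ∀ j, 0 ≤ d j)
    (hd1 : ∀ j, d j ≤ 1) {k : ℕ} (hsum : ∑ j, d j = k) :
    ∑ j, c j * d j ≤ partialSum k (sortDown c) := by
  rcases k with _ | k
  · have hd : ∀ j ∈ univ, d j = 0 :=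
      (sum_eq_zero_iff_of_nonneg fun j _ => hd0 j).mp (by simpa using hsum)
    have hcd : ∑ j, c j * d j = 0 := sum_eq_zero fun j hj => by rw [hd j hj, mul_zero]
    simp [partialSum, hcd]
  have hkn : k < n := by
    have : ∑ j, d j ≤ n := by simpa using sum_le_sum fun j (_ : j ∈ univ) => hd1 j
    exact_mod_cast (hsum ▸ this : ((k + 1 : ℕ) : ℝ) ≤ n)
  set t := sortDown c ⟨k, hkn⟩
  have hpoint : ∀ j, c j * d j ≤ max (c j - t) 0 + t * d j := fun j => by
    rcases le_total (c j) t with h | h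
    · nlinarith [hd0 j, le_max_right (c j - t) 0]
    · nlinarith [hd1 j, le_max_left (c j - t) 0]
  calc ∑ j, c j * d j ≤ ∑ j, (max (c j - t) 0 + t * d j) := sum_le_sum fun j _ => hpoint j
    _ = partialSum (k + 1) (fun j => sortDown c j - t) + t * (k + 1 : ℕ) := by
      rw [sum_add_distrib, ← mul_sum, hsum, sum_max_sub_sortDown_eq_partialSum]
    _ = partialSum (k + 1) (sortDown c) := by
      unfold partialSum
      rw [sum_sub_distrib, sum_const, Fin.card_filter_val_lt, min_eq_right hkn,
        nsmul_eq_mul]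
      ring

end Sorting

section Spectral

variable {𝕜 : Type*} [RCLike 𝕜] {n : ℕ}

lemma eigValsDown_eq_sortDown {H : Matrix (Fin n) (Fin n) 𝕜} (hH : H.IsHermitian) :
    eigValsDown H = sortDown hH.eigenvalues := by
  rw [eigValsDown, dif_pos hH]
  rfl

lemma sum_norm_sq_row_eq_one {W : Matrix (Fin n) (Fin n) 𝕜} (hW : W ∈ unitaryGroup (Fin n) 𝕜)
    (j : Fin n) : ∑ i, ‖W j i‖ ^ 2 = 1 := by
  have h := congrFun (congrFun ((mem_unitaryGroup_iff).mp hW) j) j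
  rw [mul_apply, one_apply_eq] at h
  simp only [star_apply, RCLike.star_def, RCLike.mul_conj] at h
  exact_mod_cast h

lemma sum_norm_sq_col_eq_one {W : Matrix (Fin n) (Fin n) 𝕜} (hW : W ∈ unitaryGroup (Fin n) 𝕜)
    (i : Fin n) : ∑ j, ‖W j i‖ ^ 2 = 1 := by
  simpa [star_apply] using sum_norm_sq_row_eq_one (Unitary.star_mem hW) i

lemma re_star_mul_diagonal_mul_apply (W : Matrix (Fin n) (Fin n) 𝕜) (c : Fin n → ℝ) (i : Fin n) :
    RCLike.re ((star W * diagonal (RCLike.ofReal ∘ c) * W : Matrix (Fin n) (Fin n) 𝕜) i i) =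
      ∑ j, c j * ‖W j i‖ ^ 2 := by
  rw [mul_apply, map_sum]
  refine sum_congr rfl fun j _ => ?_
  rw [mul_diagonal, star_apply, Function.comp_apply, RCLike.star_def, mul_right_comm,
    RCLike.conj_mul]
  norm_cast
  ring

/-- With `W = U⋆ V`, the weights `d j = ∑ i ∈ s, ‖W j i‖ ^ 2` are doubly substochastic with
total mass `#s`. -/
lemma sum_re_diag_conj_diagonal_le_partialSum {U V : Matrix (Fin n) (Fin n) 𝕜}
    (hU : U ∈ unitaryGroup (Fin n) 𝕜) (hV : V ∈ unitaryGroup (Fin n) 𝕜) (c : Fin n → ℝ)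
    (s : Finset (Fin n)) :
    ∑ i ∈ s, RCLike.re ((star V * (U * diagonal (RCLike.ofReal ∘ c) * star U) * V :
        Matrix (Fin n) (Fin n) 𝕜) i i) ≤
      partialSum s.card (sortDown c) := by
  set W := star U * V
  have hW : W ∈ unitaryGroup (Fin n) 𝕜 := mul_mem (Unitary.star_mem hU) hV
  have hconj : star V * (U * diagonal (RCLike.ofReal ∘ c) * star U) * V =
      star W * diagonal (RCLike.ofReal ∘ c) * W := by
    simp only [W, star_mul, star_star, Matrix.mul_assoc]
  have hswap : ∑ i ∈ s, ∑ j, c j * ‖W j i‖ ^ 2 = ∑ j, c j * ∑ i ∈ s, ‖W j i‖ ^ 2 := by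
    rw [sum_comm]
    simp only [mul_sum]
  rw [hconj]
  simp only [re_star_mul_diagonal_mul_apply]
  rw [hswap]
  refine sum_mul_le_partialSum_sortDown c _ (fun j => sum_nonneg fun i _ => by positivity)
    (fun j => ?_) ?_
  · calc ∑ i ∈ s, ‖W j i‖ ^ 2 ≤ ∑ i, ‖W j i‖ ^ 2 :=
          sum_le_sum_of_subset_of_nonneg (subset_univ s) fun i _ _ => by positivity
      _ = 1 := sum_norm_sq_row_eq_one hW j
  · rw [sum_comm, sum_congr rfl fun i _ => sum_norm_sq_col_eq_one hW i]
    simp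

lemma sum_re_diag_conj_le_partialSum_eigValsDown {X V : Matrix (Fin n) (Fin n) 𝕜}
    (hX : X.IsHermitian) (hV : V ∈ unitaryGroup (Fin n) 𝕜) (s : Finset (Fin n)) :
    ∑ i ∈ s, RCLike.re ((star V * X * V) i i) ≤ partialSum s.card (eigValsDown X) := by
  have hspec : X = (hX.eigenvectorUnitary : Matrix (Fin n) (Fin n) 𝕜) *
      diagonal (RCLike.ofReal ∘ hX.eigenvalues) *
      star (hX.eigenvectorUnitary : Matrix (Fin n) (Fin n) 𝕜) :=
    hX.spectral_theorem
  rw [eigValsDown_eq_sortDown hX]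
  conv_lhs => rw [hspec]
  exact sum_re_diag_conj_diagonal_le_partialSum hX.eigenvectorUnitary.2 hV _ s

lemma exists_card_eq_sum_re_diag_eq_partialSum_eigValsDown {Z : Matrix (Fin n) (Fin n) 𝕜}
    (hZ : Z.IsHermitian) (k : ℕ) :
    ∃ s : Finset (Fin n), s.card = min n k ∧
      ∑ i ∈ s, RCLike.re ((star (hZ.eigenvectorUnitary : Matrix (Fin n) (Fin n) 𝕜) * Z *
        hZ.eigenvectorUnitary) i i) = partialSum k (eigValsDown Z) := by
  have hdiag : star (hZ.eigenvectorUnitary : Matrix (Fin n) (Fin n) 𝕜) * Z *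
      (hZ.eigenvectorUnitary : Matrix (Fin n) (Fin n) 𝕜) =
        diagonal (RCLike.ofReal ∘ hZ.eigenvalues) := by
    simpa using hZ.conjStarAlgAut_star_eigenvectorUnitary
  obtain ⟨s, hs, hsum⟩ := exists_card_eq_sum_eq_partialSum_sortDown hZ.eigenvalues k
  refine ⟨s, hs, ?_⟩
  simp [hdiag, eigValsDown_eq_sortDown hZ, ← hsum]

lemma partialSum_eigValsDown_conj_diagonal {U : Matrix (Fin n) (Fin n) 𝕜}
    (hU : U ∈ unitaryGroup (Fin n) 𝕜) (c : Fin n → ℝ) (k : ℕ) :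
    partialSum k (eigValsDown (U * diagonal (RCLike.ofReal ∘ c) * star U)) =
      partialSum k (sortDown c) := by
  set H := U * diagonal (RCLike.ofReal ∘ c) * star U with hH_def
  have hH : H.IsHermitian := by
    rw [hH_def, star_eq_conjTranspose]
    exact isHermitian_mul_mul_conjTranspose U
      (isHermitian_diagonal_iff.mpr fun i => RCLike.conj_ofReal (c i))
  apply le_antisymm
  · obtain ⟨s, hs, hsum⟩ := exists_card_eq_sum_re_diag_eq_partialSum_eigValsDown hH k
    rw [← hsum, ← partialSum_min, ← hs]
    exact sum_re_diag_conj_diagonal_le_partialSum hU hH.eigenvectorUnitary.2 c s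
  · obtain ⟨s, hs, hsum⟩ := exists_card_eq_sum_eq_partialSum_sortDown c k
    have hdiag : star U * H * U = diagonal (RCLike.ofReal ∘ c) := by
      simp only [H, Matrix.mul_assoc, (mem_unitaryGroup_iff').mp hU, Matrix.mul_one]
      rw [← Matrix.mul_assoc, (mem_unitaryGroup_iff').mp hU, Matrix.one_mul]
    have hbound := sum_re_diag_conj_le_partialSum_eigValsDown hH hU s
    rw [hdiag, hs, partialSum_min] at hbound
    rw [← hsum]
    simpa using hbound

theorem partialSum_eigValsDown_add_le {X Y : Matrix (Fin n) (Fin n) 𝕜} (hX : X.IsHermitian)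
    (hY : Y.IsHermitian) (k : ℕ) :
    partialSum k (eigValsDown (X + Y)) ≤
      partialSum k (eigValsDown X) + partialSum k (eigValsDown Y) := by
  obtain ⟨s, hs, hsum⟩ := exists_card_eq_sum_re_diag_eq_partialSum_eigValsDown (hX.add hY) k
  have hV := (hX.add hY).eigenvectorUnitary.2
  have hXs := sum_re_diag_conj_le_partialSum_eigValsDown hX hV s
  have hYs := sum_re_diag_conj_le_partialSum_eigValsDown hY hV s
  rw [hs, partialSum_min] at hXs hYs
  rw [← hsum]
  simpa only [Matrix.mul_add, Matrix.add_mul, Matrix.add_apply, map_add, sum_add_distrib] using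
    add_le_add hXs hYs

lemma matFun_eq_cfc (f : ℝ → ℝ) {G : Matrix (Fin n) (Fin n) 𝕜} (hG : G.IsHermitian) :
    matFun f G = cfc f G := by
  rw [hG.cfc_eq, IsHermitian.cfc, matFun, dif_pos hG, Unitary.conjStarAlgAut_apply]
  rfl

lemma partialSum_eigValsDown_cfc {G : Matrix (Fin n) (Fin n) 𝕜} (hG : G.IsHermitian)
    {g : ℝ → ℝ} (hg : Monotone g) (k : ℕ) :
    partialSum k (eigValsDown (cfc g G)) = partialSum k (g ∘ eigValsDown G) := by
  rw [hG.cfc_eq, IsHermitian.cfc, Unitary.conjStarAlgAut_apply,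
    partialSum_eigValsDown_conj_diagonal hG.eigenvectorUnitary.2, sortDown_comp_of_monotone _ hg,
    eigValsDown_eq_sortDown hG]

end Spectral

/-- if the partial eigenvalue-sum inequality between `aA + B` and `aA + C`
(with `A = f₁(G)`, `B = f₂(G)`, `f₁, f₂` monotone) holds for some `a ≥ 0`, then it holds
for every `b` with `0 ≤ b ≤ a`. -/
theorem stmt6 {n : ℕ} (G C : Matrix (Fin n) (Fin n) ℂ)
    (hG : G.IsHermitian) (hC : C.IsHermitian)
    (f₁ f₂ : ℝ → ℝ) (hf₁ : Monotone f₁) (hf₂ : Monotone f₂)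
    (A B : Matrix (Fin n) (Fin n) ℂ)
    (hA : A = matFun f₁ G) (hB : B = matFun f₂ G)
    (k : ℕ) (a : ℝ) (ha : 0 ≤ a)
    (hineq : ∑ j ∈ Finset.univ.filter (fun j : Fin n => (j : ℕ) < k),
          eigValsDown (a • A + B) j ≤
        ∑ j ∈ Finset.univ.filter (fun j : Fin n => (j : ℕ) < k),
          eigValsDown (a • A + C) j)
    (b : ℝ) (hb0 : 0 ≤ b) (hba : b ≤ a) :
    ∑ j ∈ Finset.univ.filter (fun j : Fin n => (j : ℕ) < k),
        eigValsDown (b • A + B) j ≤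
      ∑ j ∈ Finset.univ.filter (fun j : Fin n => (j : ℕ) < k),
        eigValsDown (b • A + C) j := by
  rw [matFun_eq_cfc f₁ hG] at hA
  rw [matFun_eq_cfc f₂ hG] at hB
  subst hA hB
  have hcont (f : ℝ → ℝ) : ContinuousOn f (spectrum ℝ G) := G.finite_real_spectrum.continuousOn f
  have hpencil (t : ℝ) (ht : 0 ≤ t) : partialSum k (eigValsDown (t • cfc f₁ G + cfc f₂ G)) =
      t * partialSum k (f₁ ∘ eigValsDown G) + partialSum k (f₂ ∘ eigValsDown G) := by
    rw [← cfc_const_mul t f₁ G (hcont _), ← cfc_add G _ _ (hcont _) (hcont _),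
      partialSum_eigValsDown_cfc hG ((hf₁.const_mul ht).add hf₂)]
    simp only [partialSum, Function.comp_apply, sum_add_distrib, mul_sum]
  have hgap : partialSum k (eigValsDown ((a - b) • cfc f₁ G)) =
      (a - b) * partialSum k (f₁ ∘ eigValsDown G) := by
    rw [← cfc_const_mul _ f₁ G (hcont _),
      partialSum_eigValsDown_cfc hG (hf₁.const_mul (sub_nonneg.mpr hba))]
    simp only [partialSum, Function.comp_apply, mul_sum]
  have hF₁ : (cfc f₁ G).IsHermitian := IsSelfAdjoint.cfc
  have hKyFan :=
    partialSum_eigValsDown_add_le (hF₁.smul (.all (a - b))) ((hF₁.smul (.all b)).add hC) k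
  rw [← add_assoc, ← add_smul, sub_add_cancel] at hKyFan
  change partialSum k _ ≤ partialSum k _ at hineq ⊢
  linarith [hpencil a ha, hpencil b hb0]
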